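/- arXiv:1406.6202 — 2 statements merged into one kernel-verified Lean document; each statement's English description precedes it below -/
import Mathlib

section
/- If f has a strong fractional Mellin derivative g = s-Θ_c^α f of order α > 0 in X_c (i.e. ‖Δ_h^{α,c} f/(h−1)^α − g‖_{X_c} → 0 as h → 1), then for s = c+it, M[s-Θ_c^α f](s) = (−it)^α M[f](s). -/
/-!
On the line `s = c + it` the fractional difference acts on Mellin transforms as a multiplier:
summing termwise, which is legitimate because `∑ |C(α,j)| < ∞` for `α > 0`, gives
`M[Δ_h^{α,c} f](s) = Φ(h^{-it}) M[f](s)` with `Φ(z) = ∑ C(α,j) (-1)^{α-j} z^j`, and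
`Φ(z) = (-1)^α (1 - z)^α` on the closed unit disc. Since `|M[φ](s)| ≤ ‖φ‖_{X_c}`, strong
convergence gives `Φ(h^{-it}) / (h - 1)^α · M[f](s) → M[g](s)`. For `0 < h < 1` that quotient is
`((h^{-it} - 1) / (h - 1))^α`, a difference quotient of `h ↦ h^{-it}` at `1`, so it tends to
`(-it)^α`.
-/

open MeasureTheory Set Filter

noncomputable def gbinom (α : ℝ) (j : ℕ) : ℝ :=
  (∏ i ∈ Finset.range j, (α - i)) / (Nat.factorial j)

noncomputable def mellinCoef (α : ℝ) (j : ℕ) : ℂ :=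
  (gbinom α j : ℂ) * (-1 : ℂ) ^ ((α : ℂ) - (j : ℂ))

noncomputable def mellinDiff (α c h : ℝ) (f : ℝ → ℂ) (x : ℝ) : ℂ :=
  ∑' j : ℕ, mellinCoef α j * ((((h : ℝ) ^ j) ^ c : ℝ) : ℂ) * f ((h : ℝ) ^ j * x)

def memXc (c : ℝ) (f : ℝ → ℂ) : Prop :=
  IntegrableOn (fun x : ℝ => x ^ (c - 1) * ‖f x‖) (Set.Ioi 0)

noncomputable def mellinT (f : ℝ → ℂ) (s : ℂ) : ℂ :=
  ∫ u in Set.Ioi (0 : ℝ), (u : ℂ) ^ (s - 1) * f u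

open Complex Topology

section Binomial

lemma gbinom_succ (α : ℝ) (j : ℕ) :
    gbinom α (j + 1) = gbinom α j * ((α - j) / (j + 1)) := by
  rw [gbinom, gbinom, Finset.prod_range_succ, Nat.factorial_succ]
  push_cast
  rw [div_mul_div_comm, mul_comm ((j : ℝ) + 1)]

lemma mul_abs_gbinom_eq_sub {α : ℝ} {j : ℕ} (hj : α ≤ j) :
    α * |gbinom α j| = j * |gbinom α j| - (j + 1) * |gbinom α (j + 1)| := by
  have hj1 : (0 : ℝ) < j + 1 := by positivity
  rw [gbinom_succ, abs_mul, abs_div, abs_of_nonpos (sub_nonpos.mpr hj), abs_of_pos hj1]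
  field_simp
  ring

lemma summable_abs_gbinom {α : ℝ} (hα : 0 < α) : Summable fun j ↦ |gbinom α j| := by
  set N := ⌈α⌉₊
  set d : ℕ → ℝ := fun k ↦ ((k + N : ℕ) : ℝ) * |gbinom α (k + N)|
  have hstep (k : ℕ) : α * |gbinom α (k + N)| = d k - d (k + 1) := by
    have hk : α ≤ ((k + N : ℕ) : ℝ) := (Nat.le_ceil α).trans (by exact_mod_cast Nat.le_add_left N k)
    simp only [d, mul_abs_gbinom_eq_sub hk, Nat.add_right_comm k 1 N]
    push_cast
    ring
  rw [← summable_nat_add_iff N]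
  refine summable_of_sum_range_le (c := d 0 / α) (fun _ ↦ abs_nonneg _) fun n ↦ ?_
  have htel : α * ∑ k ∈ Finset.range n, |gbinom α (k + N)| = d 0 - d n := by
    rw [Finset.mul_sum, ← Finset.sum_range_sub']
    exact Finset.sum_congr rfl fun k _ ↦ hstep k
  have hdn : 0 ≤ d n := by positivity
  rw [le_div_iff₀ hα]
  linarith

lemma ofReal_gbinom (α : ℝ) (j : ℕ) : (gbinom α j : ℂ) = Ring.choose (α : ℂ) j := by
  rw [Ring.choose_eq_smul, ← Polynomial.aeval_eq_smeval, ← Polynomial.eval_map_algebraMap,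
    descPochhammer_map, descPochhammer_eval_eq_prod_range, gbinom]
  push_cast
  simp [div_eq_inv_mul]

lemma hasSum_gbinom_mul_pow (α : ℝ) {w : ℂ} (hw : ‖w‖ < 1) :
    HasSum (fun j ↦ (gbinom α j : ℂ) * w ^ j) ((1 + w) ^ (α : ℂ)) := by
  have := (one_add_cpow_hasFPowerSeriesOnBall_zero (a := (α : ℂ))).hasSum (y := w)
    (by simpa [← ofReal_norm] using hw)
  simpa [binomialSeries, FormalMultilinearSeries.ofScalars_apply_eq, ofReal_gbinom, mul_comm]
    using this

end Binomial

section Symbol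

lemma mellinCoef_eq (α : ℝ) (j : ℕ) :
    mellinCoef α j = (-1 : ℂ) ^ (α : ℂ) * ((gbinom α j : ℂ) * (-1) ^ j) := by
  rw [mellinCoef, cpow_sub _ _ (by norm_num), cpow_natCast, div_eq_mul_inv, ← inv_pow, inv_neg,
    inv_one]
  ring

lemma norm_mellinCoef (α : ℝ) (j : ℕ) : ‖mellinCoef α j‖ = |gbinom α j| := by
  simp [mellinCoef_eq]

noncomputable def mellinDiffSymbol (α : ℝ) (z : ℂ) : ℂ :=
  ∑' j, mellinCoef α j * z ^ j

lemma continuousOn_mellinDiffSymbol {α : ℝ} (hα : 0 < α) :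
    ContinuousOn (mellinDiffSymbol α) (Metric.closedBall 0 1) := by
  refine continuousOn_tsum (fun j ↦ (continuous_const.mul (continuous_pow j)).continuousOn)
    (summable_abs_gbinom hα) fun j z hz ↦ ?_
  rw [mem_closedBall_zero_iff] at hz
  rw [norm_mul, norm_pow, norm_mellinCoef]
  exact mul_le_of_le_one_right (abs_nonneg _) (pow_le_one₀ (norm_nonneg _) hz)

lemma mellinDiffSymbol_eq_of_norm_lt_one (α : ℝ) {z : ℂ} (hz : ‖z‖ < 1) :
    mellinDiffSymbol α z = (-1 : ℂ) ^ (α : ℂ) * (1 - z) ^ (α : ℂ) := by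
  have hsum := (hasSum_gbinom_mul_pow α (w := -z) (by rwa [norm_neg])).mul_left
    ((-1 : ℂ) ^ (α : ℂ))
  rw [← sub_eq_add_neg] at hsum
  rw [← hsum.tsum_eq, mellinDiffSymbol]
  exact tsum_congr fun j ↦ by rw [mellinCoef_eq, neg_pow z]; ring

/-- On the unit circle the identity is Abel's theorem; here it follows from continuity, since the
series converges absolutely on the closed disc. -/
lemma mellinDiffSymbol_eq {α : ℝ} (hα : 0 < α) {z : ℂ} (hz : ‖z‖ ≤ 1) :
    mellinDiffSymbol α z = (-1 : ℂ) ^ (α : ℂ) * (1 - z) ^ (α : ℂ) := by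
  have hpow : ContinuousOn (fun w : ℂ ↦ (-1 : ℂ) ^ (α : ℂ) * (1 - w) ^ (α : ℂ))
      (Metric.closedBall 0 1) := fun w hw ↦ by
    rw [mem_closedBall_zero_iff] at hw
    have hre : 0 ≤ (1 - w).re := by
      simpa using (re_le_norm w).trans hw
    exact (continuousAt_const.mul ((continuousAt_cpow_const_of_re_pos (Or.inl hre)
      (by simpa using hα)).comp (continuousAt_const.sub continuousAt_id))).continuousWithinAt
  refine EqOn.of_subset_closure (fun w hw ↦ mellinDiffSymbol_eq_of_norm_lt_one α ?_)
    (continuousOn_mellinDiffSymbol hα) hpow Metric.ball_subset_closedBall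
    (closure_ball 0 one_ne_zero).ge (mem_closedBall_zero_iff.mpr hz)
  exact mem_ball_zero_iff.mp hw

end Symbol

section Quotient

lemma ofReal_mul_cpow {r : ℝ} (hr : 0 < r) (w β : ℂ) :
    ((r : ℂ) * w) ^ β = (r : ℂ) ^ β * w ^ β := by
  rcases eq_or_ne w 0 with rfl | hw
  · rcases eq_or_ne β 0 with rfl | hβ <;> simp [*]
  have hr0 : (r : ℂ) ≠ 0 := ofReal_ne_zero.mpr hr.ne'
  rw [cpow_def_of_ne_zero (mul_ne_zero hr0 hw), cpow_def_of_ne_zero hr0, cpow_def_of_ne_zero hw,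
    log_ofReal_mul hr hw, add_mul, exp_add, ← ofReal_log hr.le]

/-- The principal branch makes `(h - 1)^α` carry the same phase `(-1)^α` as the symbol, which
then cancels in the difference quotient. -/
lemma mellinDiffSymbol_div_cpow {α : ℝ} (hα : 0 < α) {h : ℝ} (hh : h < 1) {z : ℂ}
    (hz : ‖z‖ ≤ 1) :
    mellinDiffSymbol α z / ((h : ℂ) - 1) ^ (α : ℂ) = ((z - 1) / ((h : ℂ) - 1)) ^ (α : ℂ) := by
  have h1 : 0 < 1 - h := sub_pos.mpr hh
  have hr : 0 < (1 - h)⁻¹ := inv_pos.mpr h1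
  have hden : (h : ℂ) - 1 = ((1 - h : ℝ) : ℂ) * (-1) := by push_cast; ring
  have hquot : (z - 1) / ((h : ℂ) - 1) = (((1 - h)⁻¹ : ℝ) : ℂ) * (1 - z) := by
    have : ((1 - h : ℝ) : ℂ) ≠ 0 := ofReal_ne_zero.mpr h1.ne'
    rw [hden]
    push_cast
    field_simp
    ring
  have hinv : (((1 - h)⁻¹ : ℝ) : ℂ) ^ (α : ℂ) = ((((1 - h) ^ α : ℝ)) : ℂ)⁻¹ := by
    rw [← ofReal_cpow hr.le, Real.inv_rpow h1.le, ofReal_inv]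
  have hpos : ((((1 - h) ^ α : ℝ)) : ℂ) ≠ 0 :=
    ofReal_ne_zero.mpr (Real.rpow_pos_of_pos h1 α).ne'
  have hphase : (-1 : ℂ) ^ (α : ℂ) ≠ 0 := by simp
  rw [mellinDiffSymbol_eq hα hz, hquot, hden, ofReal_mul_cpow h1, ← ofReal_cpow h1.le,
    ofReal_mul_cpow hr, hinv]
  field_simp

lemma hasDerivAt_exp_neg_mul_log_mul_I (t : ℝ) :
    HasDerivAt (fun h : ℝ ↦ exp (((-(t * Real.log h) : ℝ) : ℂ) * I)) (-(t : ℂ) * I) 1 := by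
  have hlog : HasDerivAt (fun h : ℝ ↦ -(t * Real.log h)) (-(t * 1)) 1 := by
    simpa using ((Real.hasDerivAt_log one_ne_zero).const_mul t).fun_neg
  simpa using (hlog.ofReal_comp.mul_const I).cexp

lemma tendsto_mellinDiffSymbol_div_cpow {α : ℝ} (hα : 0 < α) (t : ℝ) :
    Tendsto (fun h : ℝ ↦ mellinDiffSymbol α (exp (((-(t * Real.log h) : ℝ) : ℂ) * I)) /
        ((h : ℂ) - 1) ^ (α : ℂ)) (𝓝[<] 1) (𝓝 ((-(t : ℂ) * I) ^ (α : ℂ))) := by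
  set z : ℝ → ℂ := fun h ↦ exp (((-(t * Real.log h) : ℝ) : ℂ) * I)
  have hslope : Tendsto (fun h : ℝ ↦ (z h - 1) / ((h : ℂ) - 1)) (𝓝[<] 1)
      (𝓝 (-(t : ℂ) * I)) := by
    have := (hasDerivAt_iff_tendsto_slope.mp (hasDerivAt_exp_neg_mul_log_mul_I t)).mono_left
      (nhdsWithin_mono _ fun h (hh : h < 1) ↦ hh.ne)
    refine this.congr fun h ↦ ?_
    simp [z, slope_def_module, div_eq_inv_mul]
  have hcpow : ContinuousAt (fun w : ℂ ↦ w ^ (α : ℂ)) (-(t : ℂ) * I) :=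
    continuousAt_cpow_const_of_re_pos (Or.inl (by simp)) (by simpa using hα)
  refine (hcpow.tendsto.comp hslope).congr' ?_
  filter_upwards [self_mem_nhdsWithin] with h (hh : h < 1)
  refine (mellinDiffSymbol_div_cpow hα hh ?_).symm
  simp [z, norm_exp]

end Quotient

section Mellin

lemma integrable_tsum_of_summable_integral_norm {α ι E : Type*} [MeasurableSpace α]
    {μ : Measure α} [Countable ι] [NormedAddCommGroup E] [CompleteSpace E] {F : ι → α → E}
    (hF_int : ∀ i, Integrable (F i) μ) (hF_sum : Summable fun i ↦ ∫ a, ‖F i a‖ ∂μ) :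
    Integrable (fun a ↦ ∑' i, F i a) μ := by
  refine ⟨AEStronglyMeasurable.tsum fun i ↦ (hF_int i).1, ?_⟩
  calc ∫⁻ a, ‖∑' i, F i a‖ₑ ∂μ ≤ ∫⁻ a, ∑' i, ‖F i a‖ₑ ∂μ :=
        lintegral_mono fun _ ↦ enorm_tsum_le_tsum_enorm
    _ = ∑' i, ENNReal.ofReal (∫ a, ‖F i a‖ ∂μ) := by
        rw [lintegral_tsum fun i ↦ (hF_int i).1.enorm]
        exact tsum_congr fun i ↦ (ofReal_integral_norm_eq_lintegral_enorm (hF_int i)).symm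
    _ = ENNReal.ofReal (∑' i, ∫ a, ‖F i a‖ ∂μ) :=
        (ENNReal.ofReal_tsum_of_nonneg (fun _ ↦ integral_nonneg fun _ ↦ norm_nonneg _) hF_sum).symm
    _ < ⊤ := ENNReal.ofReal_lt_top

variable {E : Type*} [NormedAddCommGroup E] [NormedSpace ℂ E]

lemma norm_ofReal_cpow_smul {x : ℝ} (hx : 0 < x) (s : ℂ) (v : E) :
    ‖(x : ℂ) ^ (s - 1) • v‖ = x ^ (s.re - 1) * ‖v‖ := by
  rw [norm_smul, norm_cpow_eq_rpow_re_of_pos hx, sub_re, one_re]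

lemma norm_mellin_le (f : ℝ → E) (s : ℂ) :
    ‖mellin f s‖ ≤ ∫ x in Ioi 0, x ^ (s.re - 1) * ‖f x‖ :=
  (norm_integral_le_integral_norm _).trans_eq <|
    setIntegral_congr_fun measurableSet_Ioi fun _ hx ↦ norm_ofReal_cpow_smul hx s _

lemma memXc.mellinConvergent {c : ℝ} {f : ℝ → ℂ} (hf : memXc c f)
    (hmeas : AEStronglyMeasurable f (volume.restrict (Ioi 0))) {s : ℂ} (hs : s.re = c) :
    MellinConvergent f s := by
  rw [MellinConvergent, mellin_convergent_iff_norm subset_rfl measurableSet_Ioi hmeas, hs]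
  exact hf

lemma setIntegral_rpow_mul_norm_dilation (f : ℝ → E) (c : ℝ) {a : ℝ} (ha : 0 < a) :
    ∫ x in Ioi 0, x ^ (c - 1) * ‖((a ^ c : ℝ) : ℂ) • f (a * x)‖ =
      ∫ x in Ioi 0, x ^ (c - 1) * ‖f x‖ := by
  have hpt : ∀ x ∈ Ioi (0 : ℝ), x ^ (c - 1) * ‖((a ^ c : ℝ) : ℂ) • f (a * x)‖ =
      a * ((a * x) ^ (c - 1) * ‖f (a * x)‖) := fun x hx ↦ by
    rw [norm_smul, norm_real, Real.norm_of_nonneg (by positivity),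
      Real.mul_rpow ha.le (le_of_lt hx), Real.rpow_sub_one ha.ne']
    field_simp
  rw [setIntegral_congr_fun measurableSet_Ioi hpt, integral_const_mul,
    integral_comp_mul_left_Ioi (fun x ↦ x ^ (c - 1) * ‖f x‖) 0 ha, mul_zero, smul_eq_mul,
    mul_inv_cancel_left₀ ha.ne']

lemma mellin_dilation (f : ℝ → E) (c t : ℝ) {a : ℝ} (ha : 0 < a) :
    mellin (fun x ↦ ((a ^ c : ℝ) : ℂ) • f (a * x)) (c + t * I) =
      exp (((-(t * Real.log a) : ℝ) : ℂ) * I) • mellin f (c + t * I) := by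
  have ha0 : (a : ℂ) ≠ 0 := ofReal_ne_zero.mpr ha.ne'
  rw [mellin_const_smul, mellin_comp_mul_left _ _ ha, smul_smul, ofReal_cpow ha.le,
    ← cpow_add _ _ ha0, cpow_def_of_ne_zero ha0, ← ofReal_log ha.le]
  congr 2
  push_cast
  ring

end Mellin

lemma hasMellin_mellinDiff {α c : ℝ} (hα : 0 < α) {f : ℝ → ℂ} (hf : memXc c f)
    (hmeas : AEStronglyMeasurable f (volume.restrict (Ioi 0))) {h : ℝ} (hh : 0 < h) (t : ℝ) :
    HasMellin (mellinDiff α c h f) (c + t * I)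
      (mellinDiffSymbol α (exp (((-(t * Real.log h) : ℝ) : ℂ) * I)) * mellin f (c + t * I)) := by
  set s : ℂ := c + t * I
  set z : ℂ := exp (((-(t * Real.log h) : ℝ) : ℂ) * I)
  have hs : s.re = c := by simp [s]
  have hfs : MellinConvergent f s := hf.mellinConvergent hmeas hs
  set T : ℕ → ℝ → ℂ := fun j x ↦ mellinCoef α j • ((((h ^ j) ^ c : ℝ) : ℂ) • f (h ^ j * x))
  have hT_conv (j : ℕ) : MellinConvergent (T j) s :=
    (((MellinConvergent.comp_mul_left (pow_pos hh j)).mpr hfs).const_smul _).const_smul _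
  have hT_mellin (j : ℕ) : mellin (T j) s = mellinCoef α j * z ^ j * mellin f s := by
    have hz : exp (((-(t * Real.log (h ^ j)) : ℝ) : ℂ) * I) = z ^ j := by
      rw [Real.log_pow, ← exp_nat_mul]
      push_cast
      ring_nf
    rw [mellin_const_smul, mellin_dilation f c t (pow_pos hh j), hz, smul_eq_mul, smul_eq_mul,
      mul_assoc]
  have hT_norm (j : ℕ) : ∫ x in Ioi (0 : ℝ), ‖(x : ℂ) ^ (s - 1) • T j x‖ =
      |gbinom α j| * ∫ x in Ioi 0, x ^ (c - 1) * ‖f x‖ := by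
    rw [← setIntegral_rpow_mul_norm_dilation f c (pow_pos hh j), ← integral_const_mul]
    refine setIntegral_congr_fun measurableSet_Ioi fun x hx ↦ ?_
    rw [norm_ofReal_cpow_smul hx, hs, norm_smul, norm_mellinCoef]
    ring
  have hT_sum : Summable fun j ↦ ∫ x in Ioi (0 : ℝ), ‖(x : ℂ) ^ (s - 1) • T j x‖ :=
    ((summable_abs_gbinom hα).mul_right _).congr fun j ↦ (hT_norm j).symm
  have hpt : (fun x : ℝ ↦ ∑' j, (x : ℂ) ^ (s - 1) • T j x) =
      fun x : ℝ ↦ (x : ℂ) ^ (s - 1) • mellinDiff α c h f x := by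
    ext x
    simp only [T, mellinDiff, smul_eq_mul, tsum_mul_left, mul_assoc]
  refine ⟨?_, ?_⟩
  · rw [MellinConvergent, IntegrableOn, ← hpt]
    exact integrable_tsum_of_summable_integral_norm hT_conv hT_sum
  · rw [mellinDiffSymbol, ← tsum_mul_right, mellin, ← hpt,
      ← (hasSum_integral_of_summable_integral_norm hT_conv hT_sum).tsum_eq]
    exact tsum_congr hT_mellin

lemma norm_mellinDiffSymbol_div_mul_mellin_sub_le {α c : ℝ} (hα : 0 < α) {f g : ℝ → ℂ}
    (hf : memXc c f) (hmeasf : AEStronglyMeasurable f (volume.restrict (Ioi 0)))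
    (hg : memXc c g) (hmeasg : AEStronglyMeasurable g (volume.restrict (Ioi 0)))
    {h : ℝ} (hh : 0 < h) (t : ℝ) :
    ‖mellinDiffSymbol α (exp (((-(t * Real.log h) : ℝ) : ℂ) * I)) / ((h : ℂ) - 1) ^ (α : ℂ) *
        mellin f (c + t * I) - mellin g (c + t * I)‖ ≤
      ∫ x in Ioi 0, x ^ (c - 1) * ‖mellinDiff α c h f x / ((h : ℂ) - 1) ^ (α : ℂ) - g x‖ := by
  have hs : (c + t * I).re = c := by simp
  have hΔ := hasMellin_mellinDiff hα hf hmeasf hh t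
  have hsub := hasMellin_sub (hΔ.1.div_const (((h : ℂ) - 1) ^ (α : ℂ)))
    (hg.mellinConvergent hmeasg hs)
  rw [mellin_div_const, hΔ.2] at hsub
  calc _ = ‖mellin (fun x ↦ mellinDiff α c h f x / ((h : ℂ) - 1) ^ (α : ℂ) - g x)
        (c + t * I)‖ := by rw [hsub.2, div_mul_eq_mul_div]
    _ ≤ _ := by simpa only [hs] using norm_mellin_le _ (c + t * I)

/-- If g = s-Θ_c^α f is the strong fractional Mellin derivative of f of order α in X_c,
then M[g](c+it) = (−it)^α M[f](c+it). -/
theorem stmt3 (α c : ℝ) (hα : 0 < α) (f g : ℝ → ℂ)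
    (hmeasf : Measurable f) (hmeasg : Measurable g)
    (hf : memXc c f) (hg : memXc c g)
    (hstrong : Tendsto
      (fun h : ℝ => ∫ x in Set.Ioi (0 : ℝ),
        x ^ (c - 1) *
          ‖mellinDiff α c h f x / ((h : ℂ) - 1) ^ (α : ℂ) - g x‖)
      (nhdsWithin (1 : ℝ) {h : ℝ | 0 < h ∧ h ≠ 1}) (nhds 0)) :
    ∀ t : ℝ,
      mellinT g ((c : ℂ) + (t : ℂ) * Complex.I)
        = (-(t : ℂ) * Complex.I) ^ (α : ℂ) *
          mellinT f ((c : ℂ) + (t : ℂ) * Complex.I) := by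
  intro t
  change mellin g (c + t * I) = _ * mellin f (c + t * I)
  have hleft : 𝓝[<] (1 : ℝ) ≤ 𝓝[{h : ℝ | 0 < h ∧ h ≠ 1}] 1 := by
    rw [← nhdsWithin_Ioo_eq_nhdsLT zero_lt_one]
    exact nhdsWithin_mono _ fun h hh ↦ ⟨hh.1, hh.2.ne⟩
  have hclose : Tendsto (fun h : ℝ ↦ mellinDiffSymbol α (exp (((-(t * Real.log h) : ℝ) : ℂ) * I)) /
      ((h : ℂ) - 1) ^ (α : ℂ) * mellin f (c + t * I) - mellin g (c + t * I)) (𝓝[<] 1) (𝓝 0) := by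
    refine squeeze_zero_norm' ?_ (hstrong.mono_left hleft)
    filter_upwards [Ioo_mem_nhdsLT zero_lt_one] with h hh
    exact norm_mellinDiffSymbol_div_mul_mellin_sub_le hα hf hmeasf.aestronglyMeasurable hg
      hmeasg.aestronglyMeasurable hh.1 t
  refine tendsto_nhds_unique ?_ ((tendsto_mellinDiffSymbol_div_cpow hα t).mul_const _)
  simpa using hclose.add_const (mellin g (c + t * I))
end

section
/- Let α > 0 and ν < c. If f ∈ Dom J^α_{0+,c} ∩ X_{[ν,c]}, then J^α_{0+,c} f ∈ X_ν with ‖J^α_{0+,c} f‖_{X_ν} ≤ ‖f‖_{X_ν}/(c−ν)^α, and M[J^α_{0+,c} f](ν+it) = (c−ν−it)^{-α} M[f](ν+it) for all t ∈ ℝ. -/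
open MeasureTheory Set

def memDomJ (α c : ℝ) (f : ℝ → ℂ) : Prop :=
  ∀ᵐ x ∂(volume.restrict (Set.Ioi (0 : ℝ))),
    (∫⁻ u in Set.Ioo (0 : ℝ) x,
      ENNReal.ofReal (u ^ (c - 1) * Real.log (x / u) ^ (α - 1) * ‖f u‖)) < ⊤

noncomputable def hadamardJ (α c : ℝ) (f : ℝ → ℂ) (x : ℝ) : ℂ :=
  ((1 / Real.Gamma α : ℝ) : ℂ) *
    ∫ u in Set.Ioo (0 : ℝ) x,
      (((u / x) ^ c * Real.log (x / u) ^ (α - 1) / u : ℝ) : ℂ) * f u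

open Complex Filter Topology

/-!
Membership and the norm bound follow from Tonelli, the Mellin identity from Fubini, on the
region `0 < u < x`. In both, the inner integral in `x` becomes a Gamma integral under the
substitution `x = u eᵗ`: `∫_u^∞ x^(-z-1) log(x/u)^(α-1) dx = u^(-z) Γ(α) z^(-α)` for `Re z > 0`,
with `z = c - ν` for the norm and `z = c - s` for the Mellin transform at `s`. For complex `z`,
`∫_0^∞ t^(α-1) e^(-zt) dt = Γ(α) z^(-α)` follows from the real case by analytic continuation.
-/

lemma integrable_and_integral_le_of_lintegral_ofReal_le {X : Type*} [MeasurableSpace X]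
    {μ : Measure X} {g : X → ℝ} (hg : AEStronglyMeasurable g μ) (hnonneg : 0 ≤ᵐ[μ] g) {B : ℝ}
    (hB : 0 ≤ B) (h : ∫⁻ x, ENNReal.ofReal (g x) ∂μ ≤ ENNReal.ofReal B) :
    Integrable g μ ∧ ∫ x, g x ∂μ ≤ B := by
  refine ⟨⟨hg, ?_⟩, ?_⟩
  · rw [hasFiniteIntegral_iff_ofReal hnonneg]
    exact h.trans_lt ENNReal.ofReal_lt_top
  · rw [integral_eq_lintegral_of_nonneg_ae hnonneg hg]
    exact ENNReal.toReal_le_of_le_ofReal hB h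

lemma ae_restrict_Ioi_rpow_mul_norm_nonneg {E : Type*} [SeminormedAddGroup E] (ν : ℝ)
    (g : ℝ → E) :
    0 ≤ᵐ[volume.restrict (Ioi 0)] fun x : ℝ => x ^ (ν - 1) * ‖g x‖ := by
  filter_upwards [ae_restrict_mem measurableSet_Ioi] with x (hx : 0 < x)
  positivity

section GammaIntegral

variable {a : ℝ}

lemma norm_rpow_mul_cexp_neg_mul {t : ℝ} (ht : 0 < t) (z : ℂ) :
    ‖((t ^ (a - 1) : ℝ) : ℂ) * cexp (-(z * t))‖
      = t ^ (a - 1) * Real.exp (-z.re * t ^ (1 : ℝ)) := by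
  rw [norm_mul, norm_real, norm_exp, Real.norm_of_nonneg (by positivity), Real.rpow_one]
  simp

lemma integrableOn_rpow_mul_cexp_neg_mul (ha : 0 < a) {z : ℂ} (hz : 0 < z.re) :
    IntegrableOn (fun t : ℝ => ((t ^ (a - 1) : ℝ) : ℂ) * cexp (-(z * t))) (Ioi 0) := by
  refine Integrable.mono'
    (integrableOn_rpow_mul_exp_neg_mul_rpow (s := a - 1) (by linarith) one_pos hz) (by fun_prop) ?_
  filter_upwards [ae_restrict_mem measurableSet_Ioi] with t ht
  exact (norm_rpow_mul_cexp_neg_mul ht z).le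

lemma differentiableOn_integral_rpow_mul_cexp_neg_mul (ha : 0 < a) :
    DifferentiableOn ℂ (fun z : ℂ => ∫ t in Ioi (0 : ℝ), ((t ^ (a - 1) : ℝ) : ℂ) * cexp (-(z * t)))
      {z | 0 < z.re} := by
  intro z hz
  have hδ : 0 < z.re / 2 := half_pos hz
  have hball : ∀ w ∈ Metric.ball z (z.re / 2), z.re / 2 ≤ w.re := fun w hw => by
    have := (abs_re_le_norm (w - z)).trans (mem_ball_iff_norm.mp hw).le
    rw [sub_re, abs_le] at this
    linarith
  refine (hasDerivAt_integral_of_dominated_loc_of_deriv_le (μ := volume.restrict (Ioi 0))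
    (F := fun w (t : ℝ) => ((t ^ (a - 1) : ℝ) : ℂ) * cexp (-(w * t)))
    (F' := fun w (t : ℝ) => ((t ^ (a - 1) : ℝ) : ℂ) * cexp (-(w * t)) * -t)
    (bound := fun t => t ^ a * Real.exp (-(z.re / 2) * t ^ (1 : ℝ)))
    (Metric.ball_mem_nhds z hδ) (.of_forall fun w => by fun_prop)
    (integrableOn_rpow_mul_cexp_neg_mul ha hz) (by fun_prop) ?_
    (integrableOn_rpow_mul_exp_neg_mul_rpow (by linarith) one_pos hδ) ?_).2.differentiableAt
    |>.differentiableWithinAt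
  · filter_upwards [ae_restrict_mem measurableSet_Ioi] with t (ht : 0 < t) w hw
    rw [norm_mul, norm_rpow_mul_cexp_neg_mul ht, norm_neg, norm_real, Real.norm_of_nonneg ht.le,
      mul_right_comm, ← Real.rpow_add_one ht.ne', sub_add_cancel]
    gcongr
    exact hball w hw
  · refine .of_forall fun t w _ => ?_
    exact (((hasDerivAt_id w).mul_const (t : ℂ)).neg.cexp.const_mul _).congr_deriv (by simp; ring)

lemma integral_rpow_mul_cexp_neg_mul_Ioi (ha : 0 < a) {z : ℂ} (hz : 0 < z.re) :
    ∫ t in Ioi (0 : ℝ), ((t ^ (a - 1) : ℝ) : ℂ) * cexp (-(z * t))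
      = Real.Gamma a * z ^ (-(a : ℂ)) := by
  have hopen : IsOpen {z : ℂ | 0 < z.re} := isOpen_lt continuous_const continuous_re
  have hreal : ∀ r : ℝ, 0 < r →
      ∫ t in Ioi (0 : ℝ), ((t ^ (a - 1) : ℝ) : ℂ) * cexp (-(r * t))
        = Real.Gamma a * r ^ (-(a : ℂ)) := by
    intro r hr
    have := congrArg ((↑) : ℝ → ℂ) (Real.integral_rpow_mul_exp_neg_mul_Ioi ha hr)
    rw [← integral_complex_ofReal, one_div, Real.inv_rpow hr.le, ← Real.rpow_neg hr.le,
      mul_comm] at this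
    push_cast [ofReal_cpow hr.le] at this
    exact this
  refine (differentiableOn_integral_rpow_mul_cexp_neg_mul ha).analyticOnNhd hopen
    |>.eqOn_of_preconnected_of_frequently_eq (g := fun z : ℂ => Real.Gamma a * z ^ (-(a : ℂ)))
      (DifferentiableOn.analyticOnNhd (fun w hw => ((differentiableAt_id.cpow
        (differentiableAt_const _) (Or.inl hw)).const_mul _).differentiableWithinAt) hopen)
      (convex_halfSpace_re_gt 0).isPreconnected (z₀ := 1) (by simp) ?_ hz
  have hray : Tendsto (fun r : ℝ => (r : ℂ)) (𝓝[>] (1 : ℝ)) (𝓝[≠] 1) :=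
    tendsto_nhdsWithin_of_tendsto_nhds_of_eventually_within _
      ((continuous_ofReal.tendsto' 1 1 ofReal_one).mono_left nhdsWithin_le_nhds)
      (eventually_nhdsWithin_of_forall fun r (hr : r ∈ Ioi 1) =>
        mem_compl_singleton_iff.mpr (by exact_mod_cast (mem_Ioi.mp hr).ne'))
  exact hray.frequently (eventually_nhdsWithin_of_forall
    fun r (hr : r ∈ Ioi 1) => hreal r (one_pos.trans hr)).frequently

end GammaIntegral

section LogKernel

variable {a u : ℝ}

lemma image_mul_exp_Ioi_zero (hu : 0 < u) : (fun t => u * Real.exp t) '' Ioi 0 = Ioi u := by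
  rw [show (fun t => u * Real.exp t) = (u * ·) ∘ Real.exp from rfl, image_comp,
    Real.image_exp_Ioi, Real.exp_zero, image_mul_left_Ioi hu, mul_one]

lemma injOn_mul_exp (hu : 0 < u) : InjOn (fun t => u * Real.exp t) (Ioi 0) :=
  fun _ _ _ _ h => Real.exp_injective (mul_left_cancel₀ hu.ne' h)

lemma hasDerivWithinAt_mul_exp (t : ℝ) :
    HasDerivWithinAt (fun t => u * Real.exp t) (u * Real.exp t) (Ioi 0) t :=
  ((Real.hasDerivAt_exp t).const_mul u).hasDerivWithinAt

lemma log_mul_exp (hu : 0 < u) (t : ℝ) : Real.log (u * Real.exp t) = Real.log u + t := by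
  rw [Real.log_mul hu.ne' (Real.exp_pos t).ne', Real.log_exp]

lemma log_mul_exp_div (hu : 0 < u) (t : ℝ) : Real.log (u * Real.exp t / u) = t := by
  rw [mul_div_cancel_left₀ _ hu.ne', Real.log_exp]

lemma lintegral_rpow_mul_log_div_rpow_Ioi (ha : 0 < a) {b : ℝ} (hb : 0 < b) (hu : 0 < u) :
    ∫⁻ x in Ioi u, ENNReal.ofReal (x ^ (-b - 1) * Real.log (x / u) ^ (a - 1))
      = ENNReal.ofReal (u ^ (-b) * (Real.Gamma a / b ^ a)) := by
  rw [← image_mul_exp_Ioi_zero hu, lintegral_image_eq_lintegral_abs_deriv_mul measurableSet_Ioi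
    (fun t _ => hasDerivWithinAt_mul_exp t) (injOn_mul_exp hu)]
  have hsub : ∀ t ∈ Ioi (0 : ℝ), ENNReal.ofReal |u * Real.exp t| *
      ENNReal.ofReal ((u * Real.exp t) ^ (-b - 1) * Real.log (u * Real.exp t / u) ^ (a - 1))
        = ENNReal.ofReal (u ^ (-b) * (t ^ (a - 1) * Real.exp (-(b * t)))) := by
    intro t _
    have hut : 0 < u * Real.exp t := by positivity
    rw [← ENNReal.ofReal_mul (abs_nonneg _), abs_of_pos hut, log_mul_exp_div hu,
      Real.rpow_def_of_pos hut, Real.rpow_def_of_pos hu, log_mul_exp hu]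
    congr 1
    nth_rw 1 [← Real.exp_log hut, log_mul_exp hu]
    rw [mul_left_comm, ← mul_assoc, ← Real.exp_add, mul_comm (Real.exp _),
      mul_left_comm (Real.exp _), ← Real.exp_add]
    congr 2
    ring
  rw [setLIntegral_congr_fun measurableSet_Ioi hsub, ← ofReal_integral_eq_lintegral_ofReal,
    integral_const_mul, Real.integral_rpow_mul_exp_neg_mul_Ioi ha hb, one_div,
    Real.inv_rpow hb.le, inv_mul_eq_div]
  · exact ((integrableOn_rpow_mul_exp_neg_mul_rpow (s := a - 1) (by linarith) one_pos hb).congr_fun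
      (fun t _ => by simp) measurableSet_Ioi).const_mul _
  · filter_upwards [ae_restrict_mem measurableSet_Ioi] with t (ht : 0 < t)
    positivity

lemma integral_cpow_mul_log_div_rpow_Ioi (ha : 0 < a) {z : ℂ} (hz : 0 < z.re) (hu : 0 < u) :
    ∫ x in Ioi u, (x : ℂ) ^ (-z - 1) * ((Real.log (x / u) ^ (a - 1) : ℝ) : ℂ)
      = (u : ℂ) ^ (-z) * (Real.Gamma a * z ^ (-(a : ℂ))) := by
  have hcpow : ∀ x : ℝ, 0 < x → ∀ w : ℂ, (x : ℂ) ^ w = cexp (Real.log x * w) := fun x hx w => by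
    rw [cpow_def_of_ne_zero (ofReal_ne_zero.mpr hx.ne'), ofReal_log hx.le]
  have hsub : ∀ t ∈ Ioi (0 : ℝ), |u * Real.exp t| •
      (((u * Real.exp t : ℝ) : ℂ) ^ (-z - 1) * ((Real.log (u * Real.exp t / u) ^ (a - 1) : ℝ) : ℂ))
        = (u : ℂ) ^ (-z) * (((t ^ (a - 1) : ℝ) : ℂ) * cexp (-(z * t))) := by
    intro t _
    have hut : 0 < u * Real.exp t := by positivity
    rw [abs_of_pos hut, log_mul_exp_div hu, real_smul, hcpow _ hut, hcpow _ hu, log_mul_exp hu]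
    nth_rw 1 [← Real.exp_log hut, log_mul_exp hu]
    rw [ofReal_exp, mul_left_comm, ← mul_assoc, ← Complex.exp_add, mul_comm (cexp _),
      mul_left_comm (cexp _), ← Complex.exp_add]
    push_cast
    congr 2
    ring
  rw [← image_mul_exp_Ioi_zero hu, integral_image_eq_integral_abs_deriv_smul measurableSet_Ioi
    (fun t _ => hasDerivWithinAt_mul_exp t) (injOn_mul_exp hu),
    setIntegral_congr_fun measurableSet_Ioi hsub, integral_const_mul,
    integral_rpow_mul_cexp_neg_mul_Ioi ha hz]

end LogKernel

section HadamardIntegral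

variable {α c : ℝ} {f : ℝ → ℂ}

noncomputable def hadamardKernel (α c x u : ℝ) : ℝ := (u / x) ^ c * Real.log (x / u) ^ (α - 1) / u

lemma hadamardKernel_eq {x u : ℝ} (hu : 0 < u) (hx : 0 < x) :
    hadamardKernel α c x u = x ^ (-c) * Real.log (x / u) ^ (α - 1) * u ^ (c - 1) := by
  rw [hadamardKernel, Real.div_rpow hu.le hx.le, Real.rpow_neg hx.le, Real.rpow_sub_one hu.ne']
  ring

lemma hadamardKernel_nonneg {x u : ℝ} (hu : 0 < u) (hux : u ≤ x) : 0 ≤ hadamardKernel α c x u := by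
  have : 0 ≤ Real.log (x / u) := Real.log_nonneg ((one_le_div hu).mpr hux)
  have := hu.trans_le hux
  unfold hadamardKernel
  positivity

def hadamardRegion : Set (ℝ × ℝ) := {p | 0 < p.2 ∧ p.2 < p.1}

lemma measurableSet_hadamardRegion : MeasurableSet hadamardRegion :=
  (measurableSet_lt measurable_const measurable_snd).inter
    (measurableSet_lt measurable_snd measurable_fst)

noncomputable def hadamardMellinIntegrand (α c : ℝ) (f : ℝ → ℂ) (s : ℂ) : ℝ × ℝ → ℂ :=
  hadamardRegion.indicator fun p => (p.1 : ℂ) ^ (s - 1) * hadamardKernel α c p.1 p.2 * f p.2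

lemma hadamardMellinIntegrand_eq_indicator_Ioo (s : ℂ) (x u : ℝ) :
    hadamardMellinIntegrand α c f s (x, u)
      = (Ioo 0 x).indicator (fun u => (x : ℂ) ^ (s - 1) * hadamardKernel α c x u * f u) u := by
  by_cases h : u ∈ Ioo 0 x
  · rw [indicator_of_mem h, hadamardMellinIntegrand,
      indicator_of_mem (show (x, u) ∈ hadamardRegion from h)]
  · rw [indicator_of_notMem h, hadamardMellinIntegrand,
      indicator_of_notMem (show (x, u) ∉ hadamardRegion from h)]

lemma hadamardMellinIntegrand_eq_indicator_Ioi (s : ℂ) {u : ℝ} (hu : 0 < u) (x : ℝ) :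
    hadamardMellinIntegrand α c f s (x, u)
      = (Ioi u).indicator (fun x => (x : ℂ) ^ (s - 1) * hadamardKernel α c x u * f u) x := by
  by_cases h : x ∈ Ioi u
  · rw [indicator_of_mem h, hadamardMellinIntegrand,
      indicator_of_mem (show (x, u) ∈ hadamardRegion from ⟨hu, h⟩)]
  · rw [indicator_of_notMem h, hadamardMellinIntegrand,
      indicator_of_notMem (show (x, u) ∉ hadamardRegion from fun h' => h h'.2)]

lemma measurable_hadamardMellinIntegrand (hf : Measurable f) (s : ℂ) :
    Measurable (hadamardMellinIntegrand α c f s) := by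
  refine Measurable.indicator ?_ measurableSet_hadamardRegion
  unfold hadamardKernel
  fun_prop

lemma cpow_mul_hadamardJ (s : ℂ) (x : ℝ) :
    (x : ℂ) ^ (s - 1) * hadamardJ α c f x
      = ((1 / Real.Gamma α : ℝ) : ℂ) * ∫ u in Ioi 0, hadamardMellinIntegrand α c f s (x, u) := by
  simp_rw [hadamardMellinIntegrand_eq_indicator_Ioo]
  rw [setIntegral_indicator measurableSet_Ioo,
    inter_eq_right.mpr Ioo_subset_Ioi_self]
  simp_rw [mul_assoc, integral_const_mul]
  rw [hadamardJ, mul_left_comm]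
  rfl

lemma stronglyMeasurable_hadamardJ (hf : Measurable f) : StronglyMeasurable (hadamardJ α c f) := by
  have h : hadamardJ α c f
      = fun x => ((1 / Real.Gamma α : ℝ) : ℂ)
          * ∫ u in Ioi 0, hadamardMellinIntegrand α c f 1 (x, u) := by
    ext x
    rw [← cpow_mul_hadamardJ, sub_self, cpow_zero, one_mul]
  rw [h]
  exact stronglyMeasurable_const.mul
    (measurable_hadamardMellinIntegrand hf 1).stronglyMeasurable.integral_prod_right'

end HadamardIntegral

section MellinHadamard

variable {α c ν : ℝ} {f : ℝ → ℂ}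

lemma norm_cpow_mul_hadamardKernel_mul {s : ℂ} (hs : s.re = ν) {x u : ℝ} (hu : 0 < u)
    (hux : u < x) :
    ‖(x : ℂ) ^ (s - 1) * hadamardKernel α c x u * f u‖
      = x ^ (-(c - ν) - 1) * Real.log (x / u) ^ (α - 1) * (u ^ (c - 1) * ‖f u‖) := by
  have hx := hu.trans hux
  rw [norm_mul, norm_mul, norm_cpow_eq_rpow_re_of_pos hx, norm_real,
    Real.norm_of_nonneg (hadamardKernel_nonneg hu hux.le), hadamardKernel_eq hu hx, sub_re, one_re,
    hs, show -(c - ν) - 1 = ν - 1 + -c by ring, Real.rpow_add hx]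
  ring

lemma lintegral_enorm_hadamardMellinIntegrand_left (hα : 0 < α) (hν : ν < c) {s : ℂ}
    (hs : s.re = ν) {u : ℝ} (hu : 0 < u) :
    ∫⁻ x in Ioi 0, ‖hadamardMellinIntegrand α c f s (x, u)‖ₑ
      = ENNReal.ofReal (Real.Gamma α / (c - ν) ^ α) * ENNReal.ofReal (u ^ (ν - 1) * ‖f u‖) := by
  have hlog : ∀ x ∈ Ioi u, 0 ≤ x ^ (-(c - ν) - 1) * Real.log (x / u) ^ (α - 1) := fun x hx => by
    have := Real.log_nonneg ((one_le_div hu).mpr (le_of_lt hx))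
    have := hu.trans hx
    positivity
  simp_rw [hadamardMellinIntegrand_eq_indicator_Ioi s hu, enorm_indicator_eq_indicator_enorm]
  rw [lintegral_indicator measurableSet_Ioi, Measure.restrict_restrict measurableSet_Ioi,
    inter_eq_left.mpr (Ioi_subset_Ioi hu.le)]
  rw [setLIntegral_congr_fun measurableSet_Ioi (fun x hx => by
      rw [← ofReal_norm, norm_cpow_mul_hadamardKernel_mul hs hu hx,
        ENNReal.ofReal_mul (hlog x hx)]),
    lintegral_mul_const' _ _ ENNReal.ofReal_ne_top,
    lintegral_rpow_mul_log_div_rpow_Ioi hα (sub_pos.mpr hν) hu,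
    ← ENNReal.ofReal_mul (by positivity),
    ← ENNReal.ofReal_mul (by positivity)]
  congr 1
  rw [show ν - 1 = -(c - ν) + (c - 1) by ring, Real.rpow_add hu]
  ring

lemma lintegral_lintegral_enorm_hadamardMellinIntegrand (hα : 0 < α) (hν : ν < c)
    (hfm : Measurable f) (hf : memXc ν f) {s : ℂ} (hs : s.re = ν) :
    ∫⁻ x in Ioi 0, ∫⁻ u in Ioi 0, ‖hadamardMellinIntegrand α c f s (x, u)‖ₑ
      = ENNReal.ofReal (Real.Gamma α / (c - ν) ^ α * ∫ u in Ioi 0, u ^ (ν - 1) * ‖f u‖) := by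
  rw [lintegral_lintegral_swap (measurable_hadamardMellinIntegrand hfm s).enorm.aemeasurable,
    setLIntegral_congr_fun measurableSet_Ioi
      (fun u hu => lintegral_enorm_hadamardMellinIntegrand_left hα hν hs hu),
    lintegral_const_mul' _ _ ENNReal.ofReal_ne_top,
    ← ofReal_integral_eq_lintegral_ofReal hf (ae_restrict_Ioi_rpow_mul_norm_nonneg ν f),
    ← ENNReal.ofReal_mul (by positivity)]

lemma integrable_hadamardMellinIntegrand (hα : 0 < α) (hν : ν < c) (hfm : Measurable f)
    (hf : memXc ν f) {s : ℂ} (hs : s.re = ν) :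
    Integrable (hadamardMellinIntegrand α c f s)
      ((volume.restrict (Ioi 0)).prod (volume.restrict (Ioi 0))) := by
  refine ⟨(measurable_hadamardMellinIntegrand hfm s).aestronglyMeasurable, ?_⟩
  rw [HasFiniteIntegral,
    lintegral_prod _ (measurable_hadamardMellinIntegrand hfm s).enorm.aemeasurable,
    lintegral_lintegral_enorm_hadamardMellinIntegrand hα hν hfm hf hs]
  exact ENNReal.ofReal_lt_top

lemma integral_hadamardMellinIntegrand_left (hα : 0 < α) {s : ℂ} (hs : s.re < c) {u : ℝ}
    (hu : 0 < u) :
    ∫ x in Ioi 0, hadamardMellinIntegrand α c f s (x, u)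
      = Real.Gamma α * (c - s) ^ (-(α : ℂ)) * ((u : ℂ) ^ (s - 1) * f u) := by
  have hcs : 0 < ((c : ℂ) - s).re := by simpa using hs
  have hu' : (u : ℂ) ≠ 0 := ofReal_ne_zero.mpr hu.ne'
  simp_rw [hadamardMellinIntegrand_eq_indicator_Ioi s hu]
  rw [setIntegral_indicator measurableSet_Ioi, inter_eq_right.mpr (Ioi_subset_Ioi hu.le),
    setIntegral_congr_fun measurableSet_Ioi (g := fun x : ℝ =>
      (x : ℂ) ^ (-(c - s) - 1) * ((Real.log (x / u) ^ (α - 1) : ℝ) : ℂ)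
        * ((u : ℂ) ^ ((c : ℂ) - 1) * f u))
      (fun x (hx : u < x) => ?_),
    integral_mul_const, integral_cpow_mul_log_div_rpow_Ioi hα hcs hu]
  · rw [show s - 1 = -(c - s) + (c - 1) by ring, cpow_add _ _ hu']
    ring
  · have hx := hu.trans hx
    rw [hadamardKernel_eq hu hx]
    push_cast [ofReal_cpow hx.le, ofReal_cpow hu.le]
    rw [show -((c : ℂ) - s) - 1 = s - 1 + -c by ring, cpow_add _ _ (ofReal_ne_zero.mpr hx.ne')]
    ring

lemma ofReal_rpow_mul_norm_hadamardJ_le (hα : 0 < α) {x : ℝ} (hx : 0 < x) :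
    ENNReal.ofReal (x ^ (ν - 1) * ‖hadamardJ α c f x‖)
      ≤ ENNReal.ofReal (Real.Gamma α)⁻¹
        * ∫⁻ u in Ioi 0, ‖hadamardMellinIntegrand α c f ν (x, u)‖ₑ := by
  have hΓ := Real.Gamma_pos_of_pos hα
  calc ENNReal.ofReal (x ^ (ν - 1) * ‖hadamardJ α c f x‖)
      = ‖(x : ℂ) ^ ((ν : ℂ) - 1) * hadamardJ α c f x‖ₑ := by
        rw [← ofReal_norm, norm_mul, norm_cpow_eq_rpow_re_of_pos hx]
        simp
    _ = ENNReal.ofReal (Real.Gamma α)⁻¹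
          * ‖∫ u in Ioi 0, hadamardMellinIntegrand α c f ν (x, u)‖ₑ := by
        rw [cpow_mul_hadamardJ, enorm_mul, ← ofReal_norm, norm_real,
          Real.norm_of_nonneg (by positivity), one_div]
    _ ≤ _ := by gcongr; exact enorm_integral_le_lintegral_enorm _

lemma lintegral_rpow_mul_norm_hadamardJ_le (hα : 0 < α) (hν : ν < c) (hfm : Measurable f)
    (hf : memXc ν f) :
    ∫⁻ x in Ioi 0, ENNReal.ofReal (x ^ (ν - 1) * ‖hadamardJ α c f x‖)
      ≤ ENNReal.ofReal ((∫ u in Ioi 0, u ^ (ν - 1) * ‖f u‖) / (c - ν) ^ α) := by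
  have hΓ := Real.Gamma_pos_of_pos hα
  calc ∫⁻ x in Ioi 0, ENNReal.ofReal (x ^ (ν - 1) * ‖hadamardJ α c f x‖)
      ≤ ∫⁻ x in Ioi 0, ENNReal.ofReal (Real.Gamma α)⁻¹
          * ∫⁻ u in Ioi 0, ‖hadamardMellinIntegrand α c f ν (x, u)‖ₑ :=
        setLIntegral_mono' measurableSet_Ioi fun x hx => ofReal_rpow_mul_norm_hadamardJ_le hα hx
    _ = ENNReal.ofReal ((∫ u in Ioi 0, u ^ (ν - 1) * ‖f u‖) / (c - ν) ^ α) := by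
        rw [lintegral_const_mul' _ _ ENNReal.ofReal_ne_top,
          lintegral_lintegral_enorm_hadamardMellinIntegrand hα hν hfm hf (ofReal_re ν),
          ← ENNReal.ofReal_mul (by positivity)]
        congr 1
        field_simp

lemma mellinT_hadamardJ (hα : 0 < α) (hν : ν < c) (hfm : Measurable f) (hf : memXc ν f)
    {s : ℂ} (hs : s.re = ν) :
    mellinT (hadamardJ α c f) s = ((c : ℂ) - s) ^ (-(α : ℂ)) * mellinT f s := by
  have hΓ : (Real.Gamma α : ℂ) ≠ 0 := ofReal_ne_zero.mpr (Real.Gamma_pos_of_pos hα).ne'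
  calc mellinT (hadamardJ α c f) s
      = ((1 / Real.Gamma α : ℝ) : ℂ)
          * ∫ x in Ioi 0, ∫ u in Ioi 0, hadamardMellinIntegrand α c f s (x, u) := by
        simp_rw [mellinT, cpow_mul_hadamardJ, integral_const_mul]
    _ = ((1 / Real.Gamma α : ℝ) : ℂ)
          * ∫ u in Ioi 0, ∫ x in Ioi 0, hadamardMellinIntegrand α c f s (x, u) := by
        rw [integral_integral_swap (f := fun x u => hadamardMellinIntegrand α c f s (x, u))
          (integrable_hadamardMellinIntegrand hα hν hfm hf hs)]
    _ = ((1 / Real.Gamma α : ℝ) : ℂ)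
          * (Real.Gamma α * ((c : ℂ) - s) ^ (-(α : ℂ)) * mellinT f s) := by
        rw [setIntegral_congr_fun measurableSet_Ioi fun u hu =>
          integral_hadamardMellinIntegrand_left hα (hs ▸ hν) hu, integral_const_mul, mellinT]
    _ = ((c : ℂ) - s) ^ (-(α : ℂ)) * mellinT f s := by
        push_cast
        field_simp

end MellinHadamard

theorem stmt15_general (α c ν : ℝ) (hα : 0 < α) (hν : ν < c) (f : ℝ → ℂ)
    (hmeas : Measurable f)
    (hf : ∀ μ ∈ Set.Icc ν c, memXc μ f) :
    memXc ν (hadamardJ α c f) ∧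
    (∫ x in Set.Ioi (0 : ℝ), x ^ (ν - 1) * ‖hadamardJ α c f x‖)
      ≤ (∫ x in Set.Ioi (0 : ℝ), x ^ (ν - 1) * ‖f x‖) / (c - ν) ^ α ∧
    ∀ t : ℝ,
      mellinT (hadamardJ α c f) ((ν : ℂ) + (t : ℂ) * Complex.I)
        = ((c : ℂ) - (ν : ℂ) - (t : ℂ) * Complex.I) ^ (-(α : ℂ)) *
            mellinT f ((ν : ℂ) + (t : ℂ) * Complex.I) := by
  have hfν : memXc ν f := hf ν ⟨le_rfl, hν.le⟩
  obtain ⟨hJ, hJ_le⟩ := integrable_and_integral_le_of_lintegral_ofReal_le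
    (((by fun_prop : Measurable fun x : ℝ => x ^ (ν - 1)).aestronglyMeasurable).mul
      (stronglyMeasurable_hadamardJ hmeas).aestronglyMeasurable.norm)
    (ae_restrict_Ioi_rpow_mul_norm_nonneg ν _)
    (div_nonneg (integral_nonneg_of_ae (ae_restrict_Ioi_rpow_mul_norm_nonneg ν f)) (by positivity))
    (lintegral_rpow_mul_norm_hadamardJ_le hα hν hmeas hfν)
  refine ⟨hJ, hJ_le, fun t => ?_⟩
  rw [mellinT_hadamardJ hα hν hmeas hfν (by simp), sub_add_eq_sub_sub]

/-- If ν < c and f ∈ Dom J^α_{0+,c} ∩ X_{[ν,c]}, then J^α_{0+,c} f ∈ X_ν with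
‖J^α_{0+,c} f‖_{X_ν} ≤ ‖f‖_{X_ν}/(c−ν)^α, and
M[J^α_{0+,c} f](ν+it) = (c−ν−it)^{-α} M[f](ν+it). -/
theorem stmt15 (α c ν : ℝ) (hα : 0 < α) (hν : ν < c) (f : ℝ → ℂ)
    (hmeas : Measurable f) (hdom : memDomJ α c f)
    (hf : ∀ μ ∈ Set.Icc ν c, memXc μ f) :
    memXc ν (hadamardJ α c f) ∧
    (∫ x in Set.Ioi (0 : ℝ), x ^ (ν - 1) * ‖hadamardJ α c f x‖)
      ≤ (∫ x in Set.Ioi (0 : ℝ), x ^ (ν - 1) * ‖f x‖) / (c - ν) ^ α ∧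
    ∀ t : ℝ,
      mellinT (hadamardJ α c f) ((ν : ℂ) + (t : ℂ) * Complex.I)
        = ((c : ℂ) - (ν : ℂ) - (t : ℂ) * Complex.I) ^ (-(α : ℂ)) *
            mellinT f ((ν : ℂ) + (t : ℂ) * Complex.I) :=
  stmt15_general α c ν hα hν f hmeas hf
end
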